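/- arXiv:1804.06555 — 3 statements merged into one kernel-verified Lean document; each statement's English description precedes it below -/
import Mathlib

section
/- Under Assumption (σ), for every x ∈ ℝ^d the map y ↦ σ(x,y) is a C²-diffeomorphism of ℝ^d onto ℝ^d. Writing τ(x,·) for its inverse, one has ‖φ‖_∞^{-1}|z| ≤ |τ(x,z)| ≤ ‖φ‖_∞|z| for all x, z ∈ ℝ^d; there exists a constant C > 0 such that |τ(x₁,z) − τ(x₂,z)| ≤ C|x₁ − x₂||z| for all x₁, x₂, z ∈ ℝ^d; and if moreover x ↦ σ(x,y) is 1-periodic for each y, then x ↦ τ(x,z) is 1-periodic for each z. -/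
/-!
For fixed `x`, the map `σ x` is a local diffeomorphism by the inverse function theorem and is
proper by the lower growth bound, hence a covering map of `ℝ^d`. Since `ℝ^d` is simply
connected, lifting the identity through this covering gives a two-sided inverse (Hadamard's
global inverse function theorem). The inverse `τ x` is C² again by the inverse function theorem,
and its derivative `(∇σ)⁻¹` is bounded by `Cσ`, so `τ x` is `Cσ`-Lipschitz. Applying this to
`τ x₁ z - τ x₂ z = τ x₁ (σ x₂ (τ x₂ z)) - τ x₁ (σ x₁ (τ x₂ z))` and using the Lipschitz
dependence of `σ` on `x` gives the bound in `x`. Growth bounds and periodicity pass directly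
from `σ` to `τ`.
-/

open MeasureTheory Metric

noncomputable section

abbrev Ed (d : ℕ) := EuclideanSpace ℝ (Fin d)

def supNorm {d : ℕ} {F : Type*} [NormedAddCommGroup F] (f : Ed d → F) : ℝ := ⨆ x, ‖f x‖

def hSemi {d : ℕ} {F : Type*} [NormedAddCommGroup F] (θ : ℝ) (f : Ed d → F) : ℝ :=
  sInf {M | 0 ≤ M ∧ ∀ x y, ‖f x - f y‖ ≤ M * ‖x - y‖ ^ θ}

def IsPeriodic {d : ℕ} {F : Type*} (f : Ed d → F) : Prop :=
  ∀ (x : Ed d) (k : Fin d → ℤ),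
    f (x + (EuclideanSpace.equiv (Fin d) ℝ).symm (fun i => (k i : ℝ))) = f x

structure SigmaHyp (d : ℕ) (σ : Ed d → Ed d → Ed d) (Cσ : ℝ) (φ : Ed d → ℝ) : Prop where
  hC : 0 < Cσ
  smooth : ∀ x, ContDiff ℝ 2 (σ x)
  lipschitz : ∀ x₁ x₂ y, ‖σ x₁ y - σ x₂ y‖ ≤ Cσ * ‖x₁ - x₂‖ * ‖y‖
  odd : ∀ x y, σ x (-y) = -σ x y
  jacobian : ∀ x y, ∃ L : Ed d ≃L[ℝ] Ed d,
    (L : Ed d →L[ℝ] Ed d) = fderiv ℝ (σ x) y ∧ ‖(L.symm : Ed d →L[ℝ] Ed d)‖ ≤ Cσ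
  phi_meas : Measurable φ
  phi_pos : ∀ x, 0 < φ x
  phi_bdd : ∃ M, ∀ x, φ x ≤ M
  growth_lower : ∀ x y, (φ x)⁻¹ * ‖y‖ ≤ ‖σ x y‖
  growth_upper : ∀ x y, ‖σ x y‖ ≤ φ x * ‖y‖

open Topology Filter Function

section CoveringMap

variable {E X : Type*} [TopologicalSpace E] [TopologicalSpace X] {p : E → X}

theorem IsProperMap.isCoveringMap [T2Space E] (hp : IsProperMap p) (hl : IsLocalHomeomorph p) :
    IsCoveringMap p := by
  rw [isCoveringMap_iff_isCoveringMapOn_univ]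
  refine hp.isClosedMap.isCoveringMapOn_of_isLocalHomeomorphOn (fun x _ => ?_)
    (by simpa using hl.isLocalHomeomorphOn)
  exact (hp.isCompact_preimage isCompact_singleton).finite
    (.of_openPartialHomeomorph p subset_rfl fun e _ => (hl e).imp fun _ h => ⟨h.1, h.2.symm⟩)

theorem IsCoveringMap.bijective_of_simplyConnectedSpace [PreconnectedSpace E] [Nonempty E]
    [SimplyConnectedSpace X] [LocallyPathConnectedSpace X] (hp : IsCoveringMap p) :
    Bijective p := by
  obtain ⟨e₀⟩ := ‹Nonempty E›
  obtain ⟨s, ⟨hs₀, hps⟩, -⟩ :=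
    hp.existsUnique_continuousMap_lifts (ContinuousMap.id X) (p e₀) e₀ rfl
  have hsp : s ∘ p = id :=
    hp.eq_of_comp_eq (s.continuous.comp hp.continuous) continuous_id
      (by rw [← comp_assoc, hps]; rfl) e₀ (by simp [hs₀])
  exact bijective_iff_has_inverse.mpr ⟨s, congrFun hsp, congrFun hps⟩

end CoveringMap

section GlobalInverse

variable {E F : Type*} [NormedAddCommGroup E] [NormedSpace ℝ E] [CompleteSpace E]
  [NormedAddCommGroup F] [NormedSpace ℝ F] {f : E → F} {f' : E → E ≃L[ℝ] F}

theorem isLocalHomeomorph_of_hasStrictFDerivAt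
    (hf : ∀ x, HasStrictFDerivAt f (f' x : E →L[ℝ] F) x) : IsLocalHomeomorph f :=
  fun x => ⟨(hf x).toOpenPartialHomeomorph f, (hf x).mem_toOpenPartialHomeomorph_source,
    ((hf x).toOpenPartialHomeomorph_coe).symm⟩

theorem bijective_of_hasStrictFDerivAt_of_isProperMap
    (hf : ∀ x, HasStrictFDerivAt f (f' x : E →L[ℝ] F) x) (hp : IsProperMap f) : Bijective f :=
  (hp.isCoveringMap
    (isLocalHomeomorph_of_hasStrictFDerivAt hf)).bijective_of_simplyConnectedSpace

theorem contDiff_invFun_of_hasStrictFDerivAt {n : WithTop ℕ∞}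
    (hf : ∀ x, HasStrictFDerivAt f (f' x : E →L[ℝ] F) x) (hbij : Bijective f)
    (hcd : ContDiff ℝ n f) : ContDiff ℝ n (invFun f) := by
  have hl := isLocalHomeomorph_of_hasStrictFDerivAt hf
  let e := hl.toHomeomorphOfBijective hbij
  have he : invFun f = e.symm :=
    funext fun z => hbij.1 ((rightInverse_invFun hbij.2 z).trans (e.apply_symm_apply z).symm)
  exact he ▸ e.contDiff_symm (fun a => (hf a).hasFDerivAt) hcd

theorem hasFDerivAt_invFun_of_hasStrictFDerivAt
    (hf : ∀ x, HasStrictFDerivAt f (f' x : E →L[ℝ] F) x) (hbij : Bijective f) (z : F) :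
    HasFDerivAt (invFun f) ((f' (invFun f z)).symm : F →L[ℝ] E) z := by
  have hcont : Continuous (invFun f) := contDiff_zero.mp <|
    contDiff_invFun_of_hasStrictFDerivAt hf hbij <| contDiff_zero.mpr
      (isLocalHomeomorph_of_hasStrictFDerivAt hf).continuous
  exact (hf _).hasFDerivAt.of_local_left_inverse hcont.continuousAt
    (.of_forall (rightInverse_invFun hbij.2))

theorem norm_invFun_sub_le_of_hasStrictFDerivAt {C : ℝ}
    (hf : ∀ x, HasStrictFDerivAt f (f' x : E →L[ℝ] F) x) (hbij : Bijective f)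
    (hC : ∀ x, ‖((f' x).symm : F →L[ℝ] E)‖ ≤ C) (z₁ z₂ : F) :
    ‖invFun f z₁ - invFun f z₂‖ ≤ C * ‖z₁ - z₂‖ :=
  convex_univ.norm_image_sub_le_of_norm_hasFDerivWithin_le
    (fun z _ => (hasFDerivAt_invFun_of_hasStrictFDerivAt hf hbij z).hasFDerivWithinAt)
    (fun _ _ => hC _) (Set.mem_univ z₂) (Set.mem_univ z₁)

end GlobalInverse

theorem isProperMap_of_mul_norm_le_norm {E F : Type*} [NormedAddCommGroup E] [ProperSpace E]
    [NormedAddCommGroup F] [ProperSpace F] {f : E → F} {c : ℝ} (hc : 0 < c)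
    (hf : Continuous f) (h : ∀ x, c * ‖x‖ ≤ ‖f x‖) : IsProperMap f := by
  refine isProperMap_iff_tendsto_cocompact.mpr ⟨hf, ?_⟩
  rw [← Metric.cobounded_eq_cocompact, ← Metric.cobounded_eq_cocompact,
    ← tendsto_norm_atTop_iff_cobounded]
  exact tendsto_atTop_mono h (tendsto_norm_cobounded_atTop.const_mul_atTop hc)

namespace SigmaHyp

variable {d : ℕ} {σ : Ed d → Ed d → Ed d} {Cσ : ℝ} {φ : Ed d → ℝ} (hσ : SigmaHyp d σ Cσ φ)
include hσ

def jac (x y : Ed d) : Ed d ≃L[ℝ] Ed d := (hσ.jacobian x y).choose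

theorem hasStrictFDerivAt_jac (x y : Ed d) :
    HasStrictFDerivAt (σ x) (hσ.jac x y : Ed d →L[ℝ] Ed d) y := by
  rw [jac, (hσ.jacobian x y).choose_spec.1]
  exact (hσ.smooth x).contDiffAt.hasStrictFDerivAt (by norm_num)

theorem norm_jac_symm_le (x y : Ed d) : ‖((hσ.jac x y).symm : Ed d →L[ℝ] Ed d)‖ ≤ Cσ :=
  (hσ.jacobian x y).choose_spec.2

theorem bijective (x : Ed d) : Bijective (σ x) :=
  bijective_of_hasStrictFDerivAt_of_isProperMap (hσ.hasStrictFDerivAt_jac x) <|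
    isProperMap_of_mul_norm_le_norm (inv_pos.mpr (hσ.phi_pos x)) (hσ.smooth x).continuous
      (hσ.growth_lower x)

theorem contDiff_invFun (x : Ed d) : ContDiff ℝ 2 (invFun (σ x)) :=
  contDiff_invFun_of_hasStrictFDerivAt (hσ.hasStrictFDerivAt_jac x) (hσ.bijective x) (hσ.smooth x)

theorem apply_invFun (x z : Ed d) : σ x (invFun (σ x) z) = z :=
  rightInverse_invFun (hσ.bijective x).2 z

theorem norm_invFun_le (x z : Ed d) : ‖invFun (σ x) z‖ ≤ φ x * ‖z‖ := by
  have h := hσ.growth_lower x (invFun (σ x) z)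
  rwa [hσ.apply_invFun, inv_mul_le_iff₀ (hσ.phi_pos x)] at h

theorem norm_le_mul_norm_invFun (x z : Ed d) : ‖z‖ ≤ φ x * ‖invFun (σ x) z‖ := by
  simpa only [hσ.apply_invFun] using hσ.growth_upper x (invFun (σ x) z)

theorem norm_invFun_sub_invFun_le (x₁ x₂ z : Ed d) :
    ‖invFun (σ x₁) z - invFun (σ x₂) z‖ ≤ Cσ * Cσ * φ x₂ * ‖x₁ - x₂‖ * ‖z‖ := by
  set y₁ := invFun (σ x₁) z
  set y₂ := invFun (σ x₂) z
  have hCσ := hσ.hC.le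
  calc ‖y₁ - y₂‖ = ‖invFun (σ x₁) (σ x₁ y₁) - invFun (σ x₁) (σ x₁ y₂)‖ := by
        rw [leftInverse_invFun (hσ.bijective x₁).1 y₁, leftInverse_invFun (hσ.bijective x₁).1 y₂]
    _ ≤ Cσ * ‖σ x₁ y₁ - σ x₁ y₂‖ :=
        norm_invFun_sub_le_of_hasStrictFDerivAt (hσ.hasStrictFDerivAt_jac x₁) (hσ.bijective x₁)
          (hσ.norm_jac_symm_le x₁) _ _
    _ = Cσ * ‖σ x₂ y₂ - σ x₁ y₂‖ := by rw [hσ.apply_invFun, hσ.apply_invFun]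
    _ ≤ Cσ * (Cσ * ‖x₂ - x₁‖ * ‖y₂‖) := by gcongr; exact hσ.lipschitz x₂ x₁ y₂
    _ ≤ Cσ * (Cσ * ‖x₂ - x₁‖ * (φ x₂ * ‖z‖)) := by gcongr; exact hσ.norm_invFun_le x₂ z
    _ = Cσ * Cσ * φ x₂ * ‖x₁ - x₂‖ * ‖z‖ := by rw [norm_sub_rev]; ring

end SigmaHyp

theorem isPeriodic_invFun {d : ℕ} {σ : Ed d → Ed d → Ed d} (hper : ∀ y, IsPeriodic (σ · y))
    (z : Ed d) : IsPeriodic (fun x => invFun (σ x) z) := fun x k =>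
  congrArg (fun g : Ed d → Ed d => invFun g z) (funext fun y => hper y x k)

theorem statement0_general (d : ℕ) (σ : Ed d → Ed d → Ed d) (Cσ : ℝ) (φ : Ed d → ℝ)
    (hσ : SigmaHyp d σ Cσ φ) :
    ∃ τ : Ed d → Ed d → Ed d,
      (∀ x, Function.Bijective (σ x) ∧
        Function.LeftInverse (τ x) (σ x) ∧ Function.RightInverse (τ x) (σ x) ∧
        ContDiff ℝ 2 (σ x) ∧ ContDiff ℝ 2 (τ x)) ∧
      (∀ x z, (⨆ x', φ x')⁻¹ * ‖z‖ ≤ ‖τ x z‖ ∧ ‖τ x z‖ ≤ (⨆ x', φ x') * ‖z‖) ∧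
      (∃ C > (0 : ℝ), ∀ x₁ x₂ z, ‖τ x₁ z - τ x₂ z‖ ≤ C * ‖x₁ - x₂‖ * ‖z‖) ∧
      ((∀ y, IsPeriodic (fun x => σ x y)) → ∀ z, IsPeriodic (fun x => τ x z)) := by
  obtain ⟨M, hM⟩ := hσ.phi_bdd
  have hφS : ∀ x, φ x ≤ ⨆ x', φ x' := le_ciSup ⟨M, Set.forall_mem_range.mpr hM⟩
  have hS : 0 < ⨆ x', φ x' := (hσ.phi_pos 0).trans_le (hφS 0)
  have hC := hσ.hC
  refine ⟨fun x => invFun (σ x), fun x => ⟨hσ.bijective x, leftInverse_invFun (hσ.bijective x).1,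
    hσ.apply_invFun x, hσ.smooth x, hσ.contDiff_invFun x⟩, fun x z => ⟨?_, ?_⟩,
    ⟨Cσ * Cσ * ⨆ x', φ x', by positivity, fun x₁ x₂ z => ?_⟩, isPeriodic_invFun⟩
  · rw [inv_mul_le_iff₀ hS]
    exact (hσ.norm_le_mul_norm_invFun x z).trans (by gcongr; exact hφS x)
  · exact (hσ.norm_invFun_le x z).trans (by gcongr; exact hφS x)
  · exact (hσ.norm_invFun_sub_invFun_le x₁ x₂ z).trans (by gcongr; exact hφS x₂)

/-- Under Assumption (σ), for every `x` the map `y ↦ σ x y` is a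
C²-diffeomorphism of ℝ^d onto ℝ^d; its inverse `τ` satisfies the two-sided growth bound
with constant `‖φ‖_∞`, a Lipschitz-in-`x` bound, and inherits 1-periodicity in `x`. -/
theorem statement0 (d : ℕ) (hd : 1 ≤ d) (σ : Ed d → Ed d → Ed d) (Cσ : ℝ) (φ : Ed d → ℝ)
    (hσ : SigmaHyp d σ Cσ φ) :
    ∃ τ : Ed d → Ed d → Ed d,
      (∀ x, Function.Bijective (σ x) ∧
        Function.LeftInverse (τ x) (σ x) ∧ Function.RightInverse (τ x) (σ x) ∧
        ContDiff ℝ 2 (σ x) ∧ ContDiff ℝ 2 (τ x)) ∧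
      (∀ x z, (⨆ x', φ x')⁻¹ * ‖z‖ ≤ ‖τ x z‖ ∧ ‖τ x z‖ ≤ (⨆ x', φ x') * ‖z‖) ∧
      (∃ C > (0 : ℝ), ∀ x₁ x₂ z, ‖τ x₁ z - τ x₂ z‖ ≤ C * ‖x₁ - x₂‖ * ‖z‖) ∧
      ((∀ y, IsPeriodic (fun x => σ x y)) → ∀ z, IsPeriodic (fun x => τ x z)) :=
  statement0_general d σ Cσ φ hσ
end
end

section
/- Assume Assumption (σ) and let b : ℝ^d → ℝ^d be bounded measurable. Let γ ∈ (0,1) with 1+γ > α. Then for every u ∈ C_b^{1+γ}(ℝ^d) and every x ∈ ℝ^d the integral defining L^α u(x) converges absolutely, and there exists a constant C > 0, depending only on d, α, γ, ‖φ‖_∞ and ‖b‖₀, such that sup_{x∈ℝ^d} |L^α u(x)| ≤ C ‖u‖_{1+γ}. -/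
open MeasureTheory Metric

noncomputable section

/-- The nonlocal operator
`L^α u(x) = ∫_{ℝ^d∖{0}} [u(x+σ(x,y)) − u(x) − 1_B(y) σ(x,y)·∇u(x)] ν^α(dy) + b(x)·∇u(x)`. -/
def Lalpha (d : ℕ) (α : ℝ) (σ : Ed d → Ed d → Ed d) (b : Ed d → Ed d)
    (u : Ed d → ℝ) (x : Ed d) : ℝ :=
  (∫ y in {y : Ed d | y ≠ 0},
      ‖y‖ ^ (-((d : ℝ) + α)) •
        (u (x + σ x y) - u x -
          Set.indicator (ball (0 : Ed d) 1) (fun y' => fderiv ℝ u x (σ x y')) y)) +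
    fderiv ℝ u x (b x)

/-!
Split the jump integral at the unit sphere. For `|y| < 1` the compensator turns the integrand
into a first-order Taylor remainder, at most `[∇u]_γ |σ(x,y)|^(1+γ) ≤ [∇u]_γ ‖φ‖_∞^(1+γ) |y|^(1+γ)`,
and `|y|^(1+γ-d-α)` is integrable near `0` because `1 + γ > α`. For `|y| ≥ 1` the integrand is at
most `2 ‖u‖₀ |y|^(-d-α)`, integrable at infinity because `α > 0`. The drift term is at most
`‖∇u‖₀ ‖b‖₀`.
-/

open Set

section SupNormHolder

variable {d : ℕ} {F : Type*} [NormedAddCommGroup F]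

lemma norm_le_supNorm {f : Ed d → F} (h : ∃ M, ∀ x, ‖f x‖ ≤ M) (x : Ed d) :
    ‖f x‖ ≤ supNorm f := by
  obtain ⟨M, hM⟩ := h
  exact le_ciSup ⟨M, by rintro _ ⟨z, rfl⟩; exact hM z⟩ x

lemma supNorm_nonneg {f : Ed d → F} (h : ∃ M, ∀ x, ‖f x‖ ≤ M) : 0 ≤ supNorm f :=
  (norm_nonneg (f 0)).trans (norm_le_supNorm h 0)

lemma hSemi_nonneg (θ : ℝ) (f : Ed d → F) : 0 ≤ hSemi θ f :=
  Real.sInf_nonneg fun _ hM => hM.1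

lemma norm_sub_le_hSemi_mul {θ : ℝ} {f : Ed d → F}
    (h : ∃ M, 0 ≤ M ∧ ∀ x y, ‖f x - f y‖ ≤ M * ‖x - y‖ ^ θ) (x y : Ed d) :
    ‖f x - f y‖ ≤ hSemi θ f * ‖x - y‖ ^ θ := by
  rcases eq_or_ne x y with rfl | hxy
  · simpa using mul_nonneg (hSemi_nonneg θ f) (Real.rpow_nonneg le_rfl θ)
  have hpos : 0 < ‖x - y‖ ^ θ := Real.rpow_pos_of_pos (norm_pos_iff.2 (sub_ne_zero.2 hxy)) θ
  rw [← div_le_iff₀ hpos]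
  exact le_csInf h fun M hM => (div_le_iff₀ hpos).2 (hM.2 x y)

end SupNormHolder

lemma norm_sub_sub_fderiv_le_of_holder {E F : Type*} [NormedAddCommGroup E] [NormedSpace ℝ E]
    [NormedAddCommGroup F] [NormedSpace ℝ F] {u : E → F} (hu : Differentiable ℝ u)
    {H γ : ℝ} (hH : 0 ≤ H) (hγ : 0 ≤ γ)
    (hHol : ∀ x y, ‖fderiv ℝ u x - fderiv ℝ u y‖ ≤ H * ‖x - y‖ ^ γ) (x v : E) :
    ‖u (x + v) - u x - fderiv ℝ u x v‖ ≤ H * ‖v‖ ^ (1 + γ) := by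
  have hseg : ∀ z ∈ segment ℝ x (x + v), ‖fderiv ℝ u z - fderiv ℝ u x‖ ≤ H * ‖v‖ ^ γ := by
    rintro _ ⟨a, c, ha, hc, hac, rfl⟩
    have hzx : a • x + c • (x + v) - x = c • v := by
      rw [smul_add, ← add_assoc, ← add_smul, hac, one_smul, add_sub_cancel_left]
    have hle : ‖c • v‖ ≤ ‖v‖ := by
      rw [norm_smul, Real.norm_of_nonneg hc]
      exact mul_le_of_le_one_left (norm_nonneg v) (by linarith)
    refine (hHol _ _).trans ?_
    rw [hzx]
    gcongr
  have := (convex_segment x (x + v)).norm_image_sub_le_of_norm_fderiv_le'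
    (fun z _ => hu z) hseg (left_mem_segment ℝ x (x + v)) (right_mem_segment ℝ x (x + v))
  rw [Real.rpow_add' (norm_nonneg v) (by linarith), Real.rpow_one, mul_left_comm]
  simpa [mul_comm] using this

section PowerWeights

variable {E : Type*} [NormedAddCommGroup E] [NormedSpace ℝ E] [FiniteDimensional ℝ E]
  [MeasurableSpace E] [BorelSpace E] (μ : Measure E) [μ.IsAddHaarMeasure]

lemma integrableOn_ball_norm_rpow (hE : 1 ≤ Module.finrank ℝ E) {s ρ : ℝ}
    (hs : -(Module.finrank ℝ E : ℝ) < s) :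
    IntegrableOn (fun y : E => ‖y‖ ^ s) (ball 0 ρ) μ :=
  integrableOn_ball_of_norm_le_rpow (C := 1) (α := -s) hE (by linarith)
    (ae_of_all _ fun y => by simp [Real.norm_of_nonneg (Real.rpow_nonneg (norm_nonneg y) s)])
    (by fun_prop : Measurable fun y : E => ‖y‖ ^ s).aestronglyMeasurable

lemma integrableOn_compl_ball_norm_rpow {r : ℝ} (hr : (Module.finrank ℝ E : ℝ) < r) :
    IntegrableOn (fun y : E => ‖y‖ ^ (-r)) (ball 0 1)ᶜ μ := by
  have hr0 : 0 < r := (Nat.cast_nonneg _).trans_lt hr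
  refine Integrable.mono' ((integrable_one_add_norm hr).const_mul (2 ^ r)).integrableOn
    (by fun_prop : Measurable fun y : E => ‖y‖ ^ (-r)).aestronglyMeasurable.restrict
    ((ae_restrict_iff' measurableSet_ball.compl).2 (ae_of_all _ fun y hy => ?_))
  have hy : 1 ≤ ‖y‖ := by simpa using hy
  rw [Real.norm_of_nonneg (Real.rpow_nonneg (norm_nonneg y) _)]
  calc ‖y‖ ^ (-r) ≤ ((1 + ‖y‖) / 2) ^ (-r) :=
        Real.rpow_le_rpow_of_nonpos (by positivity) (by linarith) (by linarith)
    _ = 2 ^ r * (1 + ‖y‖) ^ (-r) := by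
        rw [Real.div_rpow (by positivity) zero_le_two, Real.rpow_neg zero_le_two, div_inv_eq_mul,
          mul_comm]

end PowerWeights

section JumpIntegrand

variable {E : Type*} [NormedAddCommGroup E] [NormedSpace ℝ E]

-- With `r = d + α` this is the integrand of `Lalpha`.
def jumpIntegrand (r : ℝ) (σ : E → E → E) (u : E → ℝ) (x y : E) : ℝ :=
  ‖y‖ ^ (-r) •
    (u (x + σ x y) - u x - (ball (0 : E) 1).indicator (fun y' => fderiv ℝ u x (σ x y')) y)

variable {r γ H S M : ℝ} {σ : E → E → E} {u : E → ℝ} {x : E}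

lemma norm_jumpIntegrand_le (hu : Differentiable ℝ u) (hH : 0 ≤ H) (hγ : 0 ≤ γ)
    (hHol : ∀ x y, ‖fderiv ℝ u x - fderiv ℝ u y‖ ≤ H * ‖x - y‖ ^ γ) (hS : ∀ z, ‖u z‖ ≤ S)
    (hM : 0 ≤ M) (hσ : ∀ y, ‖σ x y‖ ≤ M * ‖y‖) {y : E} (hy : y ≠ 0) :
    ‖jumpIntegrand r σ u x y‖ ≤
      H * M ^ (1 + γ) * (ball 0 1).indicator (fun y => ‖y‖ ^ (1 + γ - r)) y +
        2 * S * (ball 0 1)ᶜ.indicator (fun y => ‖y‖ ^ (-r)) y := by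
  have hy0 : 0 < ‖y‖ := norm_pos_iff.2 hy
  have hw : 0 ≤ ‖y‖ ^ (-r) := Real.rpow_nonneg hy0.le _
  rw [jumpIntegrand, norm_smul, Real.norm_of_nonneg hw]
  by_cases hb : y ∈ ball (0 : E) 1
  · rw [indicator_of_mem hb, indicator_of_mem hb, indicator_of_notMem (notMem_compl_iff.2 hb),
      mul_zero, add_zero]
    calc ‖y‖ ^ (-r) * ‖u (x + σ x y) - u x - fderiv ℝ u x (σ x y)‖
        ≤ ‖y‖ ^ (-r) * (H * ‖σ x y‖ ^ (1 + γ)) := by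
          gcongr; exact norm_sub_sub_fderiv_le_of_holder hu hH hγ hHol x (σ x y)
      _ ≤ ‖y‖ ^ (-r) * (H * (M * ‖y‖) ^ (1 + γ)) := by gcongr; exact hσ y
      _ = H * M ^ (1 + γ) * ‖y‖ ^ (1 + γ - r) := by
          rw [Real.mul_rpow hM hy0.le, sub_eq_add_neg, Real.rpow_add hy0 (1 + γ) (-r)]
          ring
  · rw [indicator_of_notMem hb, indicator_of_notMem hb, indicator_of_mem (mem_compl hb),
      sub_zero, mul_zero, zero_add]
    calc ‖y‖ ^ (-r) * ‖u (x + σ x y) - u x‖ ≤ ‖y‖ ^ (-r) * (2 * S) := by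
          gcongr
          linarith [norm_sub_le (u (x + σ x y)) (u x), hS (x + σ x y), hS x]
      _ = 2 * S * ‖y‖ ^ (-r) := mul_comm _ _

end JumpIntegrand

section JumpIntegral

variable {E : Type*} [NormedAddCommGroup E] [NormedSpace ℝ E] [FiniteDimensional ℝ E]
  [MeasurableSpace E] [BorelSpace E] (μ : Measure E) [μ.IsAddHaarMeasure]
  {r γ H S M : ℝ} {σ : E → E → E} {u : E → ℝ} {x : E}

lemma integrableOn_jumpIntegrand_and_norm_integral_le (hE : 1 ≤ Module.finrank ℝ E)
    (hr : (Module.finrank ℝ E : ℝ) < r) (hrγ : r < Module.finrank ℝ E + 1 + γ)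
    (hu : Differentiable ℝ u) (hH : 0 ≤ H) (hγ : 0 ≤ γ)
    (hHol : ∀ x y, ‖fderiv ℝ u x - fderiv ℝ u y‖ ≤ H * ‖x - y‖ ^ γ) (hS : ∀ z, ‖u z‖ ≤ S)
    (hM : 0 ≤ M) (hσc : Continuous (σ x)) (hσ : ∀ y, ‖σ x y‖ ≤ M * ‖y‖) :
    IntegrableOn (jumpIntegrand r σ u x) {y | y ≠ 0} μ ∧
      ‖∫ y in {y | y ≠ 0}, jumpIntegrand r σ u x y ∂μ‖ ≤
        H * M ^ (1 + γ) * ∫ y in ball 0 1, ‖y‖ ^ (1 + γ - r) ∂μ +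
          2 * S * ∫ y in (ball 0 1)ᶜ, ‖y‖ ^ (-r) ∂μ := by
  set g : E → ℝ := fun y =>
    H * M ^ (1 + γ) * (ball 0 1).indicator (fun y => ‖y‖ ^ (1 + γ - r)) y +
      2 * S * (ball 0 1)ᶜ.indicator (fun y => ‖y‖ ^ (-r)) y
  have hS0 : 0 ≤ S := (norm_nonneg _).trans (hS x)
  have hnear := (integrableOn_ball_norm_rpow μ hE (ρ := 1) (s := 1 + γ - r) (by linarith))
    |>.integrable_indicator measurableSet_ball
  have hfar := (integrableOn_compl_ball_norm_rpow μ hr).integrable_indicator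
    measurableSet_ball.compl
  have hg : Integrable g μ := (hnear.const_mul _).add (hfar.const_mul _)
  have hg0 : 0 ≤ g := fun y =>
    add_nonneg (mul_nonneg (by positivity) (indicator_nonneg (fun y _ => by positivity) y))
      (mul_nonneg (by positivity) (indicator_nonneg (fun y _ => by positivity) y))
  have hF : AEStronglyMeasurable (jumpIntegrand r σ u x) μ := by
    refine Measurable.aestronglyMeasurable ?_
    unfold jumpIntegrand
    have hc : Continuous fun y => fderiv ℝ u x (σ x y) := by fun_prop
    exact (by fun_prop : Measurable fun y : E => ‖y‖ ^ (-r)).smul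
      (((hu.continuous.comp (continuous_const.add hσc)).measurable.sub measurable_const).sub
        (hc.measurable.indicator measurableSet_ball))
  have hbound : ∀ᵐ y ∂μ.restrict {y | y ≠ 0}, ‖jumpIntegrand r σ u x y‖ ≤ g y :=
    ae_restrict_of_forall_mem (measurableSet_singleton 0).compl
      fun y hy => norm_jumpIntegrand_le hu hH hγ hHol hS hM hσ hy
  refine ⟨hg.integrableOn.mono' hF.restrict hbound, ?_⟩
  calc ‖∫ y in {y | y ≠ 0}, jumpIntegrand r σ u x y ∂μ‖ ≤ ∫ y in {y | y ≠ 0}, g y ∂μ :=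
        norm_integral_le_of_norm_le hg.integrableOn hbound
    _ ≤ ∫ y, g y ∂μ := setIntegral_le_integral hg (ae_of_all _ hg0)
    _ = _ := by
        rw [integral_add (hnear.const_mul _) (hfar.const_mul _), integral_const_mul,
          integral_const_mul, integral_indicator measurableSet_ball,
          integral_indicator measurableSet_ball.compl]

end JumpIntegral

theorem statement8_general (d : ℕ) (hd : 1 ≤ d) (α : ℝ) (hα : 1 < α ∧ α < 2)
    (σ : Ed d → Ed d → Ed d) (Cσ : ℝ) (φ : Ed d → ℝ) (hσ : SigmaHyp d σ Cσ φ)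
    (b : Ed d → Ed d) (hbbdd : ∃ M, ∀ x, ‖b x‖ ≤ M)
    (γ : ℝ) (hγ : 0 < γ ∧ γ < 1) (hγα : α < 1 + γ) :
    ∀ u : Ed d → ℝ, ContDiff ℝ 1 u → (∃ M, ∀ x, |u x| ≤ M) →
      (∃ M, ∀ x, ‖fderiv ℝ u x‖ ≤ M) →
      (∃ M, 0 ≤ M ∧ ∀ x y, ‖fderiv ℝ u x - fderiv ℝ u y‖ ≤ M * ‖x - y‖ ^ γ) →
      (∀ x : Ed d, IntegrableOn
        (fun y : Ed d => ‖y‖ ^ (-((d : ℝ) + α)) •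
          (u (x + σ x y) - u x -
            Set.indicator (ball (0 : Ed d) 1) (fun y' => fderiv ℝ u x (σ x y')) y))
        {y : Ed d | y ≠ 0} volume) ∧
      ∃ C > (0 : ℝ), ∀ x : Ed d,
        |Lalpha d α σ b u x| ≤
          C * (supNorm u + supNorm (fun x' => fderiv ℝ u x') +
            hSemi γ (fun x' => fderiv ℝ u x')) := by
  intro u hu hu_bdd hDu_bdd hDu_hol
  obtain ⟨Mφ, hMφ⟩ := hσ.phi_bdd
  obtain ⟨Mb, hMb⟩ := hbbdd
  have hMφ0 : 0 ≤ Mφ := (hσ.phi_pos 0).le.trans (hMφ 0)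
  have hu_bdd' : ∃ M, ∀ x, ‖u x‖ ≤ M := by simpa using hu_bdd
  set I₁ := ∫ y in ball (0 : Ed d) 1, ‖y‖ ^ (1 + γ - (d + α))
  set I₂ := ∫ y in (ball (0 : Ed d) 1)ᶜ, ‖y‖ ^ (-((d : ℝ) + α))
  have key (x : Ed d) := integrableOn_jumpIntegrand_and_norm_integral_le volume (x := x)
    (r := d + α) (by simpa using hd) (by simp; linarith) (by simp; linarith)
    (hu.differentiable one_ne_zero) (hSemi_nonneg _ _) hγ.1.le (norm_sub_le_hSemi_mul hDu_hol)
    (norm_le_supNorm hu_bdd') hMφ0 (hσ.smooth x).continuous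
    fun y => (hσ.growth_upper x y).trans (by gcongr; exact hMφ x)
  have hA : 0 ≤ Mφ ^ (1 + γ) * I₁ :=
    mul_nonneg (by positivity) (integral_nonneg fun _ => by positivity)
  have hI₂ : 0 ≤ I₂ := integral_nonneg fun _ => by positivity
  have hSu := supNorm_nonneg hu_bdd'
  have hSd := supNorm_nonneg hDu_bdd
  have hH := hSemi_nonneg γ fun x' => fderiv ℝ u x'
  have hMb0 : 0 ≤ Mb := (norm_nonneg _).trans (hMb 0)
  refine ⟨fun x => (key x).1, Mφ ^ (1 + γ) * I₁ + 2 * I₂ + Mb + 1, by linarith, fun x => ?_⟩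
  calc |Lalpha d α σ b u x|
      ≤ ‖∫ y in {y : Ed d | y ≠ 0}, jumpIntegrand ((d : ℝ) + α) σ u x y‖ +
          ‖fderiv ℝ u x (b x)‖ :=
        norm_add_le (∫ y in {y : Ed d | y ≠ 0}, jumpIntegrand ((d : ℝ) + α) σ u x y) _
    _ ≤ _ + supNorm (fun x' => fderiv ℝ u x') * Mb :=
        add_le_add (key x).2 ((fderiv ℝ u x).le_of_opNorm_le_of_le
          (norm_le_supNorm hDu_bdd x) (hMb x))
    _ ≤ _ := by
        nlinarith [mul_nonneg hA hSu, mul_nonneg hA hSd, mul_nonneg hI₂ hSd, mul_nonneg hI₂ hH,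
          mul_nonneg hMb0 hSu, mul_nonneg hMb0 hH]

/-- under Assumption (σ), for bounded measurable `b` and `u ∈ C_b^{1+γ}` with
`1+γ > α`, the integral defining `L^α u(x)` converges absolutely for every `x`, and
`sup_x |L^α u(x)| ≤ C ‖u‖_{1+γ}` for a constant `C > 0`. -/
theorem statement8 (d : ℕ) (hd : 1 ≤ d) (α : ℝ) (hα : 1 < α ∧ α < 2)
    (σ : Ed d → Ed d → Ed d) (Cσ : ℝ) (φ : Ed d → ℝ) (hσ : SigmaHyp d σ Cσ φ)
    (b : Ed d → Ed d) (hbmeas : Measurable b) (hbbdd : ∃ M, ∀ x, ‖b x‖ ≤ M)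
    (γ : ℝ) (hγ : 0 < γ ∧ γ < 1) (hγα : α < 1 + γ) :
    ∀ u : Ed d → ℝ, ContDiff ℝ 1 u → (∃ M, ∀ x, |u x| ≤ M) →
      (∃ M, ∀ x, ‖fderiv ℝ u x‖ ≤ M) →
      (∃ M, 0 ≤ M ∧ ∀ x y, ‖fderiv ℝ u x - fderiv ℝ u y‖ ≤ M * ‖x - y‖ ^ γ) →
      (∀ x : Ed d, IntegrableOn
        (fun y : Ed d => ‖y‖ ^ (-((d : ℝ) + α)) •
          (u (x + σ x y) - u x -
            Set.indicator (ball (0 : Ed d) 1) (fun y' => fderiv ℝ u x (σ x y')) y))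
        {y : Ed d | y ≠ 0} volume) ∧
      ∃ C > (0 : ℝ), ∀ x : Ed d,
        |Lalpha d α σ b u x| ≤
          C * (supNorm u + supNorm (fun x' => fderiv ℝ u x') +
            hSemi γ (fun x' => fderiv ℝ u x')) :=
  statement8_general d hd α hα σ Cσ φ hσ b hbbdd γ hγ hγα
end
end

section
/- There exists a constant C > 0, depending only on ‖b̂‖₀, ‖∇b̂‖₀, [∇b̂]_γ, C_σ and ‖φ‖_∞, such that |σ*(x₁,y) − σ*(x₂,y)| ≤ C|x₁ − x₂|(|y|^γ + |y|) for all x₁, x₂, y ∈ ℝ^d. Consequently, if in addition 2γ > α, then there is a constant C' > 0 such that ∫_{0<|y|<1} |σ*(x₁,y) − σ*(x₂,y)|² ν^α(dy) ≤ C'|x₁ − x₂|² for all x₁, x₂ ∈ ℝ^d. -/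
/-!
Write `aᵢ = Ψ xᵢ` and `sᵢ = σ(aᵢ, y)`. Then `σ*(x₁,y) − σ*(x₂,y)` is the difference of the
increments `b̂(· + s₁) − b̂` at `a₁` and `a₂`, of size at most `[∇b̂]_γ |s₁|^γ |a₁ − a₂|` by the
mean value inequality, plus `b̂(a₂ + s₁) − b̂(a₂ + s₂) + (s₁ − s₂)`, of size at most
`(3/2)|s₁ − s₂|`.
As `Ψ` is `2`-Lipschitz, `|s₁| ≲ |y|` and `|s₁ − s₂| ≲ |x₁ − x₂||y|`, which is the first bound.
On the unit ball `|y| ≤ |y|^γ`, so the integrand is `≲ |x₁ − x₂|² |y|^(2γ − d − α)`, and this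
power is integrable near `0` exactly because `2γ > α`.
-/

open MeasureTheory Metric

noncomputable section

/-- The Zvonkin-transformed coefficient
`σ*(x,y) = b̂(Ψ(x) + σ(Ψ(x),y)) − b̂(Ψ(x)) + σ(Ψ(x),y)`. -/
def zvonkinSigma {d : ℕ} (bhat Ψ : Ed d → Ed d) (σ : Ed d → Ed d → Ed d)
    (x y : Ed d) : Ed d :=
  bhat (Ψ x + σ (Ψ x) y) - bhat (Ψ x) + σ (Ψ x) y

open scoped NNReal

theorem LipschitzWith.rightInverse_id_add {E : Type*} [SeminormedAddCommGroup E] {b Ψ : E → E}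
    {L : ℝ≥0} (hb : LipschitzWith L b) (hL : L < 1)
    (hΨ : Function.RightInverse Ψ (fun x => x + b x)) :
    LipschitzWith (1 - L)⁻¹ Ψ := by
  have h := AntilipschitzWith.id.add_lipschitzWith hb (by rwa [inv_one])
  rw [inv_one] at h
  exact h.to_rightInverse hΨ

section Perturbation

variable {E : Type*} [NormedAddCommGroup E] [NormedSpace ℝ E]

theorem norm_increment_sub_le_of_holder_fderiv {F : Type*} [NormedAddCommGroup F]
    [NormedSpace ℝ F] {b : E → F} (hb : Differentiable ℝ b) {M γ : ℝ}
    (hH : ∀ x y, ‖fderiv ℝ b x - fderiv ℝ b y‖ ≤ M * ‖x - y‖ ^ γ) (s a a' : E) :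
    ‖(b (a + s) - b a) - (b (a' + s) - b a')‖ ≤ M * ‖s‖ ^ γ * ‖a - a'‖ := by
  have hderiv : ∀ x, HasFDerivAt (fun x => b (x + s) - b x)
      (fderiv ℝ b (x + s) - fderiv ℝ b x) x := fun x =>
    ((hb (x + s)).hasFDerivAt.comp x ((hasFDerivAt_id x).add_const s)).sub (hb x).hasFDerivAt
  refine Convex.norm_image_sub_le_of_norm_fderiv_le (fun x _ => (hderiv x).differentiableAt)
    (fun x _ => ?_) convex_univ trivial trivial
  simpa [(hderiv x).fderiv] using hH (x + s) x

theorem norm_perturbed_increment_sub_le {b : E → E} (hb : Differentiable ℝ b) {L : ℝ≥0}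
    (hbL : LipschitzWith L b) {M γ : ℝ}
    (hH : ∀ x y, ‖fderiv ℝ b x - fderiv ℝ b y‖ ≤ M * ‖x - y‖ ^ γ) (a₁ a₂ s₁ s₂ : E) :
    ‖(b (a₁ + s₁) - b a₁ + s₁) - (b (a₂ + s₂) - b a₂ + s₂)‖
      ≤ M * ‖s₁‖ ^ γ * ‖a₁ - a₂‖ + (L + 1) * ‖s₁ - s₂‖ := by
  have hsplit : (b (a₁ + s₁) - b a₁ + s₁) - (b (a₂ + s₂) - b a₂ + s₂)
      = ((b (a₁ + s₁) - b a₁) - (b (a₂ + s₁) - b a₂))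
        + ((b (a₂ + s₁) - b (a₂ + s₂)) + (s₁ - s₂)) := by abel
  have hshift : ‖b (a₂ + s₁) - b (a₂ + s₂)‖ ≤ L * ‖s₁ - s₂‖ := by
    simpa using hbL.norm_sub_le (a₂ + s₁) (a₂ + s₂)
  rw [hsplit]
  refine (norm_add_le _ _).trans (add_le_add
    (norm_increment_sub_le_of_holder_fderiv hb hH s₁ a₁ a₂) ?_)
  calc ‖(b (a₂ + s₁) - b (a₂ + s₂)) + (s₁ - s₂)‖
      ≤ ‖b (a₂ + s₁) - b (a₂ + s₂)‖ + ‖s₁ - s₂‖ := norm_add_le _ _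
    _ ≤ (L + 1) * ‖s₁ - s₂‖ := by linarith

end Perturbation

theorem exists_norm_zvonkinSigma_sub_le {d : ℕ} {γ : ℝ} (hγ : 0 ≤ γ) {bhat : Ed d → Ed d}
    (hb : Differentiable ℝ bhat) (hb1 : ∀ x, ‖fderiv ℝ bhat x‖ ≤ 1 / 2)
    (hb2 : ∃ M, 0 ≤ M ∧ ∀ x y, ‖fderiv ℝ bhat x - fderiv ℝ bhat y‖ ≤ M * ‖x - y‖ ^ γ)
    {Ψ : Ed d → Ed d} (hΨ : Function.RightInverse Ψ (fun x : Ed d => x + bhat x))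
    {σ : Ed d → Ed d → Ed d} {Cσ : ℝ} (hCσ : 0 < Cσ)
    (hlip : ∀ x₁ x₂ y, ‖σ x₁ y - σ x₂ y‖ ≤ Cσ * ‖x₁ - x₂‖ * ‖y‖)
    {φ : Ed d → ℝ} (hφbdd : ∃ M, ∀ x, φ x ≤ M) (hupper : ∀ x y, ‖σ x y‖ ≤ φ x * ‖y‖) :
    ∃ C > (0 : ℝ), ∀ x₁ x₂ y : Ed d,
      ‖zvonkinSigma bhat Ψ σ x₁ y - zvonkinSigma bhat Ψ σ x₂ y‖
        ≤ C * ‖x₁ - x₂‖ * (‖y‖ ^ γ + ‖y‖) := by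
  obtain ⟨M, hM0, hM⟩ := hb2
  obtain ⟨Mφ, hMφ⟩ := hφbdd
  have hbL : LipschitzWith 2⁻¹ bhat :=
    lipschitzWith_of_nnnorm_fderiv_le hb fun x => by
      rw [← NNReal.coe_le_coe, coe_nnnorm, NNReal.coe_inv]; simpa using hb1 x
  have hΨL : ∀ x₁ x₂, ‖Ψ x₁ - Ψ x₂‖ ≤ 2 * ‖x₁ - x₂‖ := by
    intro x₁ x₂
    have h := (hbL.rightInverse_id_add (by norm_num) hΨ).norm_sub_le x₁ x₂
    rw [NNReal.coe_inv, NNReal.coe_sub (by norm_num)] at h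
    convert h using 2
    norm_num
  refine ⟨2 * M * max Mφ 0 ^ γ + 3 * Cσ, by positivity, fun x₁ x₂ y => ?_⟩
  have hs : ‖σ (Ψ x₁) y‖ ^ γ ≤ max Mφ 0 ^ γ * ‖y‖ ^ γ := by
    rw [← Real.mul_rpow (le_max_right _ _) (norm_nonneg y)]
    refine Real.rpow_le_rpow (norm_nonneg _) ((hupper _ y).trans ?_) hγ
    exact mul_le_mul_of_nonneg_right ((hMφ _).trans (le_max_left _ _)) (norm_nonneg y)
  have hds : ‖σ (Ψ x₁) y - σ (Ψ x₂) y‖ ≤ Cσ * (2 * ‖x₁ - x₂‖) * ‖y‖ :=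
    (hlip _ _ y).trans (by gcongr; exact hΨL x₁ x₂)
  calc ‖zvonkinSigma bhat Ψ σ x₁ y - zvonkinSigma bhat Ψ σ x₂ y‖
      ≤ M * ‖σ (Ψ x₁) y‖ ^ γ * ‖Ψ x₁ - Ψ x₂‖
          + ((2⁻¹ : ℝ≥0) + 1) * ‖σ (Ψ x₁) y - σ (Ψ x₂) y‖ :=
        norm_perturbed_increment_sub_le hb hbL hM _ _ _ _
    _ ≤ M * (max Mφ 0 ^ γ * ‖y‖ ^ γ) * (2 * ‖x₁ - x₂‖)
          + (2⁻¹ + 1) * (Cσ * (2 * ‖x₁ - x₂‖) * ‖y‖) := by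
        push_cast
        gcongr
        exact hΨL x₁ x₂
    _ ≤ (2 * M * max Mφ 0 ^ γ + 3 * Cσ) * ‖x₁ - x₂‖ * (‖y‖ ^ γ + ‖y‖) := by
        have hcross :
            0 ≤ 2 * M * max Mφ 0 ^ γ * ‖x₁ - x₂‖ * ‖y‖ + 3 * Cσ * ‖x₁ - x₂‖ * ‖y‖ ^ γ := by
          positivity
        linear_combination hcross

section Integrability

theorem sq_mul_rpow_le_of_abs_le {t γ c u : ℝ} (ht0 : 0 < t) (ht1 : t ≤ 1) (hγ : γ ≤ 1)
    (hc : 0 ≤ c) (hu : |u| ≤ c * (t ^ γ + t)) (q : ℝ) :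
    u ^ 2 * t ^ q ≤ 4 * c ^ 2 * t ^ (2 * γ + q) := by
  have ht : t ≤ t ^ γ := by simpa using Real.rpow_le_rpow_of_exponent_ge ht0 ht1 hγ
  have hu' : |u| ≤ 2 * c * t ^ γ := hu.trans (by nlinarith)
  calc u ^ 2 * t ^ q = |u| ^ 2 * t ^ q := by rw [sq_abs]
    _ ≤ (2 * c * t ^ γ) ^ 2 * t ^ q := by gcongr
    _ = 4 * c ^ 2 * t ^ (2 * γ + q) := by
        rw [Real.rpow_add ht0, mul_comm 2 γ, Real.rpow_mul ht0.le, Real.rpow_two]; ring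

variable {E : Type*} [NormedAddCommGroup E] [NormedSpace ℝ E] [FiniteDimensional ℝ E]
  [MeasurableSpace E] [BorelSpace E] (μ : Measure E) [μ.IsAddHaarMeasure]

theorem setLIntegral_ball_norm_rpow_lt_top (hE : 1 ≤ Module.finrank ℝ E) {p : ℝ}
    (hp : -(Module.finrank ℝ E : ℝ) < p) :
    ∫⁻ y in ball (0 : E) 1, ENNReal.ofReal (‖y‖ ^ p) ∂μ < ⊤ :=
  Integrable.lintegral_lt_top <| integrableOn_ball_of_norm_le_rpow (C := 1) (α := -p) hE
    (by linarith) (.of_forall fun y => by simp [abs_of_nonneg, Real.rpow_nonneg])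
    (measurable_norm.pow_const p).aestronglyMeasurable

theorem exists_setLIntegral_sq_mul_rpow_le (hE : 1 ≤ Module.finrank ℝ E) {α γ : ℝ}
    (hγ : γ ≤ 1) (hαγ : α < 2 * γ) :
    ∃ K > (0 : ℝ), ∀ (f : E → ℝ) (c : ℝ), 0 ≤ c → (∀ y, |f y| ≤ c * (‖y‖ ^ γ + ‖y‖)) →
      ∫⁻ y in {y : E | 0 < ‖y‖ ∧ ‖y‖ < 1},
          ENNReal.ofReal (f y ^ 2 * ‖y‖ ^ (-((Module.finrank ℝ E : ℝ) + α))) ∂μ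
        ≤ ENNReal.ofReal (K * c ^ 2) := by
  set p := 2 * γ + -((Module.finrank ℝ E : ℝ) + α)
  set I := ∫⁻ y in ball (0 : E) 1, ENNReal.ofReal (‖y‖ ^ p) ∂μ
  have hI : I ≠ ⊤ := (setLIntegral_ball_norm_rpow_lt_top μ hE (by linarith)).ne
  refine ⟨4 * (I.toReal + 1), by positivity, fun f c hc hf => ?_⟩
  have hpt : ∀ y ∈ {y : E | 0 < ‖y‖ ∧ ‖y‖ < 1},
      ENNReal.ofReal (f y ^ 2 * ‖y‖ ^ (-((Module.finrank ℝ E : ℝ) + α)))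
        ≤ ENNReal.ofReal (4 * c ^ 2) * ENNReal.ofReal (‖y‖ ^ p) := fun y hy => by
    rw [← ENNReal.ofReal_mul (by positivity)]
    exact ENNReal.ofReal_le_ofReal (sq_mul_rpow_le_of_abs_le hy.1 hy.2.le hγ hc (hf y) _)
  calc _ ≤ ∫⁻ y in {y : E | 0 < ‖y‖ ∧ ‖y‖ < 1},
          ENNReal.ofReal (4 * c ^ 2) * ENNReal.ofReal (‖y‖ ^ p) ∂μ :=
        setLIntegral_mono (by fun_prop) hpt
    _ ≤ ∫⁻ y in ball (0 : E) 1, ENNReal.ofReal (4 * c ^ 2) * ENNReal.ofReal (‖y‖ ^ p) ∂μ :=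
        lintegral_mono_set fun y hy => mem_ball_zero_iff.mpr hy.2
    _ = ENNReal.ofReal (4 * c ^ 2) * I := lintegral_const_mul' _ _ ENNReal.ofReal_ne_top
    _ ≤ ENNReal.ofReal (4 * c ^ 2) * ENNReal.ofReal (I.toReal + 1) := by
        gcongr
        rw [← ENNReal.ofReal_toReal hI]
        exact ENNReal.ofReal_le_ofReal (by simp)
    _ = ENNReal.ofReal (4 * (I.toReal + 1) * c ^ 2) := by
        rw [← ENNReal.ofReal_mul (by positivity)]; ring_nf

end Integrability

theorem statement16_general (d : ℕ) (hd : 1 ≤ d) (α : ℝ)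
    (γ : ℝ) (hγ : 0 < γ ∧ γ < 1)
    (bhat : Ed d → Ed d) (hb : ContDiff ℝ 1 bhat)
    (hb1 : ∀ x, ‖fderiv ℝ bhat x‖ ≤ 1 / 2)
    (hb2 : ∃ M, 0 ≤ M ∧ ∀ x y, ‖fderiv ℝ bhat x - fderiv ℝ bhat y‖ ≤ M * ‖x - y‖ ^ γ)
    (Ψ : Ed d → Ed d)
    (hΨr : Function.RightInverse Ψ (fun x : Ed d => x + bhat x))
    (σ : Ed d → Ed d → Ed d)
    (Cσ : ℝ) (hCσ : 0 < Cσ)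
    (hlip : ∀ x₁ x₂ y, ‖σ x₁ y - σ x₂ y‖ ≤ Cσ * ‖x₁ - x₂‖ * ‖y‖)
    (φ : Ed d → ℝ)
    (hφbdd : ∃ M, ∀ x, φ x ≤ M)
    (hupper : ∀ x y, ‖σ x y‖ ≤ φ x * ‖y‖) :
    (∃ C > (0 : ℝ), ∀ x₁ x₂ y : Ed d,
      ‖zvonkinSigma bhat Ψ σ x₁ y - zvonkinSigma bhat Ψ σ x₂ y‖
        ≤ C * ‖x₁ - x₂‖ * (‖y‖ ^ γ + ‖y‖)) ∧
    (2 * γ > α → ∃ C' > (0 : ℝ), ∀ x₁ x₂ : Ed d,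
      ∫⁻ y in {y : Ed d | 0 < ‖y‖ ∧ ‖y‖ < 1},
          ENNReal.ofReal
            (‖zvonkinSigma bhat Ψ σ x₁ y - zvonkinSigma bhat Ψ σ x₂ y‖ ^ 2 *
              ‖y‖ ^ (-((d : ℝ) + α)))
        ≤ ENNReal.ofReal (C' * ‖x₁ - x₂‖ ^ 2)) := by
  obtain ⟨C, hC, hσ⟩ := exists_norm_zvonkinSigma_sub_le hγ.1.le
    (hb.differentiable one_ne_zero) hb1 hb2 hΨr hCσ hlip hφbdd hupper
  refine ⟨⟨C, hC, hσ⟩, fun hαγ => ?_⟩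
  obtain ⟨K, hK, hint⟩ := exists_setLIntegral_sq_mul_rpow_le (volume : Measure (Ed d))
    (by simpa using hd) hγ.2.le hαγ
  refine ⟨K * C ^ 2, by positivity, fun x₁ x₂ => ?_⟩
  have h := hint (fun y => ‖zvonkinSigma bhat Ψ σ x₁ y - zvonkinSigma bhat Ψ σ x₂ y‖)
    (C * ‖x₁ - x₂‖) (by positivity) fun y => by rw [abs_norm]; exact hσ x₁ x₂ y
  rw [finrank_euclideanSpace_fin] at h
  convert h using 2
  ring

/-- the Zvonkin-transformed coefficient satisfies
`|σ*(x₁,y) − σ*(x₂,y)| ≤ C|x₁−x₂|(|y|^γ + |y|)`, and if `2γ > α` then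
`∫_{0<|y|<1} |σ*(x₁,y) − σ*(x₂,y)|² ν^α(dy) ≤ C'|x₁−x₂|²`. -/
theorem statement16 (d : ℕ) (hd : 1 ≤ d) (α : ℝ) (hα : 1 < α ∧ α < 2)
    (γ : ℝ) (hγ : 0 < γ ∧ γ < 1)
    (bhat : Ed d → Ed d) (hb : ContDiff ℝ 1 bhat) (hbbdd : ∃ M, ∀ x, ‖bhat x‖ ≤ M)
    (hb1 : ∀ x, ‖fderiv ℝ bhat x‖ ≤ 1 / 2)
    (hb2 : ∃ M, 0 ≤ M ∧ ∀ x y, ‖fderiv ℝ bhat x - fderiv ℝ bhat y‖ ≤ M * ‖x - y‖ ^ γ)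
    (Ψ : Ed d → Ed d)
    (hΨl : Function.LeftInverse Ψ (fun x : Ed d => x + bhat x))
    (hΨr : Function.RightInverse Ψ (fun x : Ed d => x + bhat x))
    (σ : Ed d → Ed d → Ed d) (hσmeas : Measurable (Function.uncurry σ))
    (Cσ : ℝ) (hCσ : 0 < Cσ)
    (hlip : ∀ x₁ x₂ y, ‖σ x₁ y - σ x₂ y‖ ≤ Cσ * ‖x₁ - x₂‖ * ‖y‖)
    (φ : Ed d → ℝ) (hφmeas : Measurable φ) (hφpos : ∀ x, 0 < φ x)
    (hφbdd : ∃ M, ∀ x, φ x ≤ M)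
    (hupper : ∀ x y, ‖σ x y‖ ≤ φ x * ‖y‖) :
    (∃ C > (0 : ℝ), ∀ x₁ x₂ y : Ed d,
      ‖zvonkinSigma bhat Ψ σ x₁ y - zvonkinSigma bhat Ψ σ x₂ y‖
        ≤ C * ‖x₁ - x₂‖ * (‖y‖ ^ γ + ‖y‖)) ∧
    (2 * γ > α → ∃ C' > (0 : ℝ), ∀ x₁ x₂ : Ed d,
      ∫⁻ y in {y : Ed d | 0 < ‖y‖ ∧ ‖y‖ < 1},
          ENNReal.ofReal
            (‖zvonkinSigma bhat Ψ σ x₁ y - zvonkinSigma bhat Ψ σ x₂ y‖ ^ 2 *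
              ‖y‖ ^ (-((d : ℝ) + α)))
        ≤ ENNReal.ofReal (C' * ‖x₁ - x₂‖ ^ 2)) :=
  statement16_general d hd α γ hγ bhat hb hb1 hb2 Ψ hΨr σ Cσ hCσ hlip φ hφbdd hupper
end
end
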